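/- Scalar Gaussian–oscillatory integral with absolute value: for Γ > 0 and E ∈ ℝ, | ∫_{-∞}^∞ (2πΓ)^{-1/2} e^{-q²/(2Γ)} e^{-iE|q|} dq |² = e^{-ΓE²} ( 1 + erfi²(√(Γ/2)·E) ). -/

import Mathlib

/-!
Let `H(E) = ∫₀^∞ e^{-q²/(2Γ)} e^{-iEq} dq`, so that the integral in question is `2 H(E) / √(2πΓ)`.
Differentiating under the integral sign gives `H'(E) = -i ∫₀^∞ q e^{-q²/(2Γ)} e^{-iEq} dq`, and
since `(q + iΓE) e^{-q²/(2Γ)} e^{-iEq}` is the `q`-derivative of `-Γ e^{-q²/(2Γ)} e^{-iEq}`,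
integrating by parts turns this into the linear ODE `H' = -Γ (E H + i)`. The integrating factor
`e^{ΓE²/2}` and `H(0) = √(2πΓ)/2` give `e^{ΓE²/2} H(E) = √(2πΓ)/2 · (1 - i erfi(√(Γ/2) E))`, whose
squared modulus is the claim.
-/

open MeasureTheory Complex

noncomputable section

/-- The imaginary error function `erfi x = (2/√π) ∫₀ˣ e^{t²} dt`. -/
def erfi (x : ℝ) : ℝ := (2 / Real.sqrt Real.pi) * ∫ t in (0 : ℝ)..x, Real.exp (t ^ 2)

open Set Filter Topology

theorem integral_comp_abs_eq_two_smul {F : Type*} [NormedAddCommGroup F] [NormedSpace ℝ F]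
    {f : ℝ → F} (hf : Integrable fun x => f |x|) :
    ∫ x, f |x| = (2 : ℝ) • ∫ x in Ioi 0, f x := by
  have h_Iic : ∫ x in Iic 0, f |x| = ∫ x in Ioi 0, f |x| := by
    rw [← neg_zero, ← integral_comp_neg_Ioi, neg_zero]
    simp_rw [abs_neg]
  have h_Ioi : ∫ x in Ioi 0, f |x| = ∫ x in Ioi 0, f x :=
    setIntegral_congr_fun measurableSet_Ioi fun x hx => by rw [abs_of_pos hx]
  rw [← intervalIntegral.integral_Iic_add_Ioi hf.integrableOn hf.integrableOn, h_Iic, h_Ioi,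
    two_smul]

theorem integral_exp_mul_sq_eq_erfi {a : ℝ} (ha : a ≠ 0) (x : ℝ) :
    ∫ s in (0 : ℝ)..x, Real.exp (a ^ 2 * s ^ 2) = Real.sqrt Real.pi / (2 * a) * erfi (a * x) := by
  have hπ : Real.sqrt Real.pi ≠ 0 := (Real.sqrt_pos.mpr Real.pi_pos).ne'
  simp_rw [← mul_pow]
  rw [intervalIntegral.integral_comp_mul_left (fun t => Real.exp (t ^ 2)) ha, mul_zero, erfi,
    smul_eq_mul]
  field_simp

def gaussianWave (Γ E q : ℝ) : ℂ :=
  (Real.exp (-q ^ 2 / (2 * Γ)) : ℂ) * cexp (-(I * E * q))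

def halfGaussianTransform (Γ E : ℝ) : ℂ := ∫ q in Ioi 0, gaussianWave Γ E q

theorem norm_gaussianWave (Γ E q : ℝ) : ‖gaussianWave Γ E q‖ = Real.exp (-q ^ 2 / (2 * Γ)) := by
  rw [gaussianWave, norm_mul, Complex.norm_real, Real.norm_of_nonneg (Real.exp_pos _).le,
    Complex.norm_exp]
  simp

@[fun_prop]
theorem continuous_gaussianWave (Γ E : ℝ) : Continuous (gaussianWave Γ E) := by
  unfold gaussianWave; fun_prop

theorem integrable_exp_neg_sq_div {Γ : ℝ} (hΓ : 0 < Γ) :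
    Integrable fun q : ℝ => Real.exp (-q ^ 2 / (2 * Γ)) := by
  simpa [neg_div, div_eq_inv_mul] using integrable_exp_neg_mul_sq (b := (2 * Γ)⁻¹) (by positivity)

theorem integrable_mul_exp_neg_sq_div {Γ : ℝ} (hΓ : 0 < Γ) :
    Integrable fun q : ℝ => q * Real.exp (-q ^ 2 / (2 * Γ)) := by
  simpa [neg_div, div_eq_inv_mul] using
    integrable_mul_exp_neg_mul_sq (b := (2 * Γ)⁻¹) (by positivity)

theorem integrable_gaussianWave {Γ : ℝ} (hΓ : 0 < Γ) (E : ℝ) : Integrable (gaussianWave Γ E) :=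
  (integrable_exp_neg_sq_div hΓ).mono' (continuous_gaussianWave Γ E).aestronglyMeasurable
    (.of_forall fun q => (norm_gaussianWave Γ E q).le)

theorem integrable_mul_gaussianWave {Γ : ℝ} (hΓ : 0 < Γ) (E : ℝ) :
    Integrable fun q : ℝ => (q : ℂ) * gaussianWave Γ E q :=
  (integrable_mul_exp_neg_sq_div hΓ).norm.mono' (by fun_prop)
    (.of_forall fun q => by simp [norm_gaussianWave])

theorem hasDerivAt_gaussianWave {Γ : ℝ} (hΓ : Γ ≠ 0) (E q : ℝ) :
    HasDerivAt (fun q => -(Γ : ℂ) * gaussianWave Γ E q)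
      ((q + I * Γ * E) * gaussianWave Γ E q) q := by
  have h_gauss : HasDerivAt (fun q : ℝ => -q ^ 2 / (2 * Γ)) (-(q / Γ)) q :=
    ((hasDerivAt_pow 2 q).fun_neg.div_const (2 * Γ)).congr_deriv (by field_simp; ring)
  have h_phase : HasDerivAt (fun q : ℝ => -(I * E * q)) (-(I * E)) q := by
    convert ((hasDerivAt_id (q : ℂ)).const_mul (-(I * E))).comp_ofReal using 1
    · ext y; simp only [id]; ring
    · ring
  refine ((h_gauss.exp.ofReal_comp.mul h_phase.cexp).const_mul (-(Γ : ℂ))).congr_deriv ?_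
  have hΓ' : (Γ : ℂ) ≠ 0 := ofReal_ne_zero.mpr hΓ
  simp only [gaussianWave]
  push_cast
  field_simp
  ring

theorem tendsto_gaussianWave_atTop {Γ : ℝ} (hΓ : 0 < Γ) (E : ℝ) :
    Tendsto (gaussianWave Γ E) atTop (𝓝 0) := by
  rw [tendsto_zero_iff_norm_tendsto_zero]
  simp_rw [norm_gaussianWave, neg_div]
  exact Real.tendsto_exp_atBot.comp <| tendsto_neg_atTop_atBot.comp <|
    (tendsto_pow_atTop two_ne_zero).atTop_div_const (by positivity)

theorem integral_Ioi_add_mul_gaussianWave {Γ : ℝ} (hΓ : 0 < Γ) (E : ℝ) :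
    ∫ q in Ioi (0 : ℝ), ((q : ℂ) + I * Γ * E) * gaussianWave Γ E q = Γ := by
  have h_int : Integrable fun q : ℝ => ((q : ℂ) + I * Γ * E) * gaussianWave Γ E q := by
    simp_rw [add_mul]
    exact (integrable_mul_gaussianWave hΓ E).add ((integrable_gaussianWave hΓ E).const_mul _)
  rw [integral_Ioi_of_hasDerivAt_of_tendsto (by fun_prop)
    (fun q _ => hasDerivAt_gaussianWave hΓ.ne' E q) h_int.integrableOn
    (by simpa using (tendsto_gaussianWave_atTop hΓ E).const_mul (-(Γ : ℂ)))]
  simp [gaussianWave]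

theorem hasDerivAt_gaussianWave_param (Γ E q : ℝ) :
    HasDerivAt (fun E => gaussianWave Γ E q) (-(I * q) * gaussianWave Γ E q) E := by
  have h_phase : HasDerivAt (fun E : ℝ => -(I * E * q)) (-(I * q)) E := by
    convert ((hasDerivAt_id (E : ℂ)).const_mul (-(I * q))).comp_ofReal using 1
    · ext y; simp only [id]; ring
    · ring
  refine (h_phase.cexp.const_mul ((Real.exp (-q ^ 2 / (2 * Γ)) : ℝ) : ℂ)).congr_deriv ?_
  simp only [gaussianWave]
  ring

theorem hasDerivAt_halfGaussianTransform {Γ : ℝ} (hΓ : 0 < Γ) (E : ℝ) :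
    HasDerivAt (halfGaussianTransform Γ) (-Γ * (E * halfGaussianTransform Γ E + I)) E := by
  have h_diff := (hasDerivAt_integral_of_dominated_loc_of_deriv_le
    (μ := volume.restrict (Ioi 0)) (F := fun E q => gaussianWave Γ E q)
    (F' := fun E q => -(I * q) * gaussianWave Γ E q)
    (bound := fun q => ‖q * Real.exp (-q ^ 2 / (2 * Γ))‖) univ_mem
    (.of_forall fun E => (continuous_gaussianWave Γ E).aestronglyMeasurable)
    (integrable_gaussianWave hΓ E).integrableOn
    (by fun_prop : Continuous fun q : ℝ => -(I * q) * gaussianWave Γ E q).aestronglyMeasurable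
    (ae_of_all _ fun q E _ => by simp [norm_gaussianWave])
    (integrable_mul_exp_neg_sq_div hΓ).norm.integrableOn
    (ae_of_all _ fun q E _ => hasDerivAt_gaussianWave_param Γ E q)).2
  have h_moment : ∫ q in Ioi (0 : ℝ), (q : ℂ) * gaussianWave Γ E q
      = Γ - I * Γ * E * halfGaussianTransform Γ E := by
    have h := integral_Ioi_add_mul_gaussianWave hΓ E
    simp_rw [add_mul] at h
    rw [integral_add (integrable_mul_gaussianWave hΓ E).integrableOn
      ((integrable_gaussianWave hΓ E).const_mul _).integrableOn, integral_const_mul] at h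
    rw [halfGaussianTransform]
    linear_combination h
  refine h_diff.congr_deriv ?_
  simp_rw [neg_mul, mul_assoc, integral_neg, integral_const_mul, h_moment]
  linear_combination (Γ : ℂ) * E * halfGaussianTransform Γ E * I_sq

theorem halfGaussianTransform_zero (Γ : ℝ) :
    halfGaussianTransform Γ 0 = Real.sqrt (2 * Real.pi * Γ) / 2 := by
  have h := integral_gaussian_Ioi (2 * Γ)⁻¹
  simp_rw [neg_mul, ← div_eq_inv_mul, ← neg_div, div_inv_eq_mul] at h
  have h_wave : gaussianWave Γ 0 = fun q => ((Real.exp (-q ^ 2 / (2 * Γ)) : ℝ) : ℂ) := by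
    ext q; simp [gaussianWave]
  rw [halfGaussianTransform, h_wave, integral_complex_ofReal, h]
  push_cast
  ring_nf

theorem exp_mul_eq_add_integral_of_hasDerivAt {u f : ℝ → ℂ} {a : ℝ} (hf : Continuous f)
    (hu : ∀ x, HasDerivAt u (-(a * x) * u x + f x) x) (x : ℝ) :
    cexp (a * x ^ 2 / 2) * u x = u 0 + ∫ s in (0 : ℝ)..x, cexp (a * s ^ 2 / 2) * f s := by
  have h_factor : ∀ x : ℝ, HasDerivAt (fun x : ℝ => cexp (a * x ^ 2 / 2))
      (a * x * cexp (a * x ^ 2 / 2)) x := fun x =>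
    (((((hasDerivAt_pow 2 (x : ℂ)).const_mul (a : ℂ)).div_const 2).cexp).comp_ofReal).congr_deriv
      (by ring)
  have h_cont : Continuous fun s : ℝ => cexp (a * s ^ 2 / 2) * f s := by fun_prop
  have h_const : ∀ x : ℝ, HasDerivAt
      (fun x : ℝ => cexp (a * x ^ 2 / 2) * u x - ∫ s in (0 : ℝ)..x, cexp (a * s ^ 2 / 2) * f s)
      0 x := fun x =>
    (((h_factor x).mul (hu x)).sub (h_cont.integral_hasStrictDerivAt 0 x).hasDerivAt).congr_deriv
      (by ring)
  have := is_const_of_deriv_eq_zero (fun x => (h_const x).differentiableAt)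
    (fun x => (h_const x).deriv) x 0
  simpa [sub_eq_iff_eq_add, add_comm] using this

theorem halfGaussianTransform_eq {Γ : ℝ} (hΓ : 0 < Γ) (E : ℝ) :
    halfGaussianTransform Γ E = cexp (-(Γ * E ^ 2 / 2)) * (Real.sqrt (2 * Real.pi * Γ) / 2) *
      (1 - I * erfi (Real.sqrt (Γ / 2) * E)) := by
  set a := Real.sqrt (Γ / 2)
  have ha : 0 < a := Real.sqrt_pos.mpr (by positivity)
  have ha2 : a ^ 2 = Γ / 2 := Real.sq_sqrt (by positivity)
  have h_sqrt : Real.sqrt (2 * Real.pi * Γ) = 2 * a * Real.sqrt Real.pi := by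
    rw [show 2 * Real.pi * Γ = (2 * a) ^ 2 * Real.pi by rw [mul_pow, ha2]; ring,
      Real.sqrt_mul (by positivity), Real.sqrt_sq (by positivity)]
  have h_source : ∫ s in (0 : ℝ)..E, cexp (Γ * s ^ 2 / 2) * -(I * Γ)
      = -(I * (a * Real.sqrt Real.pi * erfi (a * E))) := by
    have h_exp : ∀ s : ℝ, cexp (Γ * s ^ 2 / 2) = (Real.exp (a ^ 2 * s ^ 2) : ℂ) := fun s => by
      rw [ha2]; push_cast; ring_nf
    simp_rw [h_exp]
    rw [intervalIntegral.integral_mul_const, intervalIntegral.integral_ofReal,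
      integral_exp_mul_sq_eq_erfi ha.ne', show Γ = 2 * a ^ 2 by rw [ha2]; ring]
    push_cast
    field_simp
  have h_ode := exp_mul_eq_add_integral_of_hasDerivAt (u := halfGaussianTransform Γ)
    (f := fun _ => -(I * Γ)) (a := Γ) continuous_const (fun E => (hasDerivAt_halfGaussianTransform hΓ E).congr_deriv (by ring)) E
  have h_inv : cexp (-(Γ * E ^ 2 / 2)) * cexp (Γ * E ^ 2 / 2) = 1 := by
    rw [← Complex.exp_add, neg_add_cancel, Complex.exp_zero]
  rw [h_source, halfGaussianTransform_zero] at h_ode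
  rw [h_sqrt] at h_ode ⊢
  push_cast at h_ode ⊢
  linear_combination cexp (-(Γ * E ^ 2 / 2)) * h_ode - halfGaussianTransform Γ E * h_inv

theorem inv_sqrt_mul_integral_gaussianWave_abs {Γ : ℝ} (hΓ : 0 < Γ) (E : ℝ) :
    (Real.sqrt (2 * Real.pi * Γ) : ℂ)⁻¹ * ∫ q, gaussianWave Γ E |q| =
      cexp (-(Γ * E ^ 2 / 2)) * (1 - I * erfi (Real.sqrt (Γ / 2) * E)) := by
  have hc : (Real.sqrt (2 * Real.pi * Γ) : ℂ) ≠ 0 :=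
    ofReal_ne_zero.mpr (Real.sqrt_pos.mpr (by positivity)).ne'
  have h_int : Integrable fun q : ℝ => gaussianWave Γ E |q| :=
    (integrable_exp_neg_sq_div hΓ).mono' (by fun_prop)
      (.of_forall fun q => by rw [norm_gaussianWave, sq_abs])
  rw [integral_comp_abs_eq_two_smul h_int, ← halfGaussianTransform, halfGaussianTransform_eq hΓ,
    real_smul, ofReal_ofNat]
  field_simp

theorem norm_one_sub_I_mul_sq (r : ℝ) : ‖1 - I * r‖ ^ 2 = 1 + r ^ 2 := by
  rw [Complex.sq_norm, Complex.normSq_apply]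
  simp
  ring

/-- Scalar Gaussian–oscillatory integral with absolute value:
`|∫ (2πΓ)^{-1/2} e^{-q²/(2Γ)} e^{-iE|q|} dq|² = e^{-ΓE²}(1 + erfi²(√(Γ/2) E))`. -/
theorem stmt11 (Γ E : ℝ) (hΓ : 0 < Γ) :
    ‖(∫ q : ℝ,
        (((Real.sqrt (2 * Real.pi * Γ))⁻¹ * Real.exp (-q ^ 2 / (2 * Γ)) : ℝ) : ℂ) *
          Complex.exp (-(I * (E : ℂ) * (|q| : ℝ))))‖ ^ 2 =
      Real.exp (-Γ * E ^ 2) * (1 + erfi (Real.sqrt (Γ / 2) * E) ^ 2) := by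
  have h_integrand : ∀ q : ℝ,
      ((((Real.sqrt (2 * Real.pi * Γ))⁻¹ * Real.exp (-q ^ 2 / (2 * Γ)) : ℝ) : ℂ) *
        cexp (-(I * E * (|q| : ℝ)))) = (Real.sqrt (2 * Real.pi * Γ) : ℂ)⁻¹ * gaussianWave Γ E |q| :=
    fun q => by simp [gaussianWave, mul_assoc]
  have h_damping : ‖cexp (-(Γ * E ^ 2 / 2))‖ ^ 2 = Real.exp (-Γ * E ^ 2) := by
    rw [show -((Γ : ℂ) * E ^ 2 / 2) = ((-(Γ * E ^ 2 / 2) : ℝ) : ℂ) by push_cast; ring,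
      Complex.norm_exp_ofReal, ← Real.exp_nat_mul]
    ring_nf
  simp_rw [h_integrand]
  rw [integral_const_mul, inv_sqrt_mul_integral_gaussianWave_abs hΓ, norm_mul, mul_pow, h_damping,
    norm_one_sub_I_mul_sq]
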